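/- arXiv:2104.01319 — 2 statements merged into one kernel-verified Lean document; each statement's English description precedes it below -/
import Mathlib

section
/- Let n ≥ 1, c ∈ ℝ, and let R : (Fin n)⁴ → ℂ, T : (Fin n)³ → ℂ, A : (Fin n)⁴ → ℂ be tensors with T^k_{ij} antisymmetric in i,j. Assume: (a) R_{k j̄ i l̄} − R_{i j̄ k l̄} = A^l_{ik,j̄} for all indices; (b) conj(R_{l k̄ j ī} − R_{j k̄ l ī}) = R_{k l̄ i j̄} − R_{k j̄ i l̄} equals conj(A^i_{jl,k̄}) for all indices (Hermitian symmetry of R); (c) the constant-H condition: (1/4)(R_{i j̄ k l̄} + R_{k j̄ i l̄} + R_{i l̄ k j̄} + R_{k l̄ i j̄}) = (c/2)(δ_{ij}δ_{kl} + δ_{il}δ_{kj}); (d) A^j_{ik,l̄} − A^l_{ik,j̄} = Σ_r T^r_{ik} conj(T^r_{jl}). Then R_{i j̄ k l̄} = (c/2)(δ_{ij}δ_{kl} + δ_{il}δ_{kj}) − (1/4) Σ_r T^r_{ik} conj(T^r_{jl}) − (1/2)(A^l_{ik,j̄} + conj(A^k_{jl,ī})) for all i,j,k,l. -/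
open BigOperators ComplexConjugate

/-- Formula (11): the Chern curvature of a pluriclosed manifold with constant
holomorphic sectional curvature `c` is determined by the torsion and its derivative.
Conventions: `R i j k l = R_{i j̄ k l̄}`, `T u i k = T^u_{ik}`, `A u i k l = A^u_{ik,l̄}`. -/
theorem stmt2 (n : ℕ) (hn : 1 ≤ n) (c : ℝ)
    (R : Fin n → Fin n → Fin n → Fin n → ℂ)
    (T : Fin n → Fin n → Fin n → ℂ)
    (A : Fin n → Fin n → Fin n → Fin n → ℂ)
    (hTanti : ∀ u i j, T u i j = - T u j i)
    (ha : ∀ i j k l, R k j i l - R i j k l = A l i k j)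
    (hb : ∀ i j k l, R k l i j - R k j i l = conj (A i j l k))
    (hc : ∀ i j k l,
      (1 / 4 : ℂ) * (R i j k l + R k j i l + R i l k j + R k l i j)
        = ((c : ℂ) / 2) *
            ((if i = j then (1 : ℂ) else 0) * (if k = l then (1 : ℂ) else 0)
              + (if i = l then (1 : ℂ) else 0) * (if k = j then (1 : ℂ) else 0)))
    (hd : ∀ i j k l, A j i k l - A l i k j = ∑ r, T r i k * conj (T r j l)) :
    ∀ i j k l,
      R i j k l
        = ((c : ℂ) / 2) *
            ((if i = j then (1 : ℂ) else 0) * (if k = l then (1 : ℂ) else 0)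
              + (if i = l then (1 : ℂ) else 0) * (if k = j then (1 : ℂ) else 0))
          - (1 / 4 : ℂ) * (∑ r, T r i k * conj (T r j l))
          - (1 / 2 : ℂ) * (A l i k j + conj (A k j l i)) := by
  intro i j k l
  have h5 : conj (A i j l k) - conj (A k j l i) = ∑ r, T r i k * conj (T r j l) := by
    have h := congrArg (starRingEnd ℂ) (hd j i l k)
    simpa [map_sub, map_sum, map_mul, mul_comm] using h
  linear_combination hc i j k l - (3/4 : ℂ) * ha i j k l + (1/4 : ℂ) * ha i l k j
    - (1/2 : ℂ) * hb i j k l + (1/4 : ℂ) * hd i j k l - (1/2 : ℂ) * h5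
end

section
/- Let n ≥ 1 and let T : (Fin n)³ → ℂ be antisymmetric in the lower two indices. Suppose Rs : (Fin n)⁴ → ℂ satisfies Rs_{i j̄ k l̄} = −Σ_r ( T^j_{ir} conj(T^k_{lr}) + T^l_{ir} conj(T^k_{jr}) + T^j_{kr} conj(T^i_{lr}) + T^l_{kr} conj(T^i_{jr}) ) for all indices, and that T^n_{ik} = 0 for all i,k, T^j_{in} = δ_{ij} a_i for some a : Fin n → ℂ, and Rs_{i j̄ k n̄} = 0 for all i,j,k. Then (conj(a_k) − conj(a_i)) T^j_{ik} = 0 for all i, j, k. -/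
open BigOperators ComplexConjugate

/-- Computation in the proof of Theorem 1 (case `c = 0`). Dimension is `n + 1`;
the last index plays the role of `n` in the paper. -/
theorem stmt9 (n : ℕ)
    (T : Fin (n + 1) → Fin (n + 1) → Fin (n + 1) → ℂ)
    (Rs : Fin (n + 1) → Fin (n + 1) → Fin (n + 1) → Fin (n + 1) → ℂ)
    (a : Fin (n + 1) → ℂ)
    (hTanti : ∀ u i j, T u i j = - T u j i)
    (hRs : ∀ i j k l,
      Rs i j k l
        = -(∑ r, (T j i r * conj (T k l r) + T l i r * conj (T k j r)
            + T j k r * conj (T i l r) + T l k r * conj (T i j r))))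
    (hTn : ∀ i k, T (Fin.last n) i k = 0)
    (hTdiag : ∀ i j, T j i (Fin.last n) = if i = j then a i else 0)
    (hRsn : ∀ i j k, Rs i j k (Fin.last n) = 0) :
    ∀ i j k, (conj (a k) - conj (a i)) * T j i k = 0 := by
  intro i j k
  have h := hRsn i j k
  rw [hRs] at h
  have hlast : ∀ u r : Fin (n + 1), T u (Fin.last n) r
      = -(if r = u then a r else 0) := by
    intro u r
    rw [hTanti, hTdiag]
  simp only [hTn, zero_mul, add_zero, zero_add, hlast, map_neg, mul_neg,
    apply_ite conj, map_zero, mul_ite, mul_zero,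
    Finset.sum_add_distrib, Finset.sum_neg_distrib,
    Finset.sum_ite_eq', Finset.mem_univ, if_true] at h
  have h2 : -(-(T j i k * conj (a k)) + -(T j k i * conj (a i))) = 0 := h
  have h3 : T j k i = - T j i k := hTanti j k i
  rw [h3] at h2
  ring_nf at h2 ⊢
  linear_combination h2
end
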